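/- Let m > 0, let n be a positive integer, let a_k ≥ b_k ≥ 36π m² be real numbers for k = 1, …, n, and let γ ≥ 0 be a constant. Then φ_m(γ + Σ_{k=1}^n a_k) − Σ_{k=1}^n φ_m(a_k) ≥ φ_m(γ + Σ_{k=1}^n b_k) − Σ_{k=1}^n φ_m(b_k). -/

import Mathlib

/-- Area of the coordinate sphere of radius `r` in the Schwarzschild manifold of
mass `m`, in isotropic coordinates: `A_m(r) = 4π r² (1 + m/(2r))⁴`. -/
noncomputable def schwA (m r : ℝ) : ℝ := 4 * Real.pi * r ^ 2 * (1 + m / (2 * r)) ^ 4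

/-- Volume enclosed between the horizon `r = m/2` and the coordinate sphere of radius `r`
in the Schwarzschild manifold of mass `m`:
`V_m(r) = ∫_{m/2}^r 4π ρ² (1 + m/(2ρ))⁶ dρ`. -/
noncomputable def schwV (m r : ℝ) : ℝ :=
  ∫ ρ in (m / 2)..r, 4 * Real.pi * ρ ^ 2 * (1 + m / (2 * ρ)) ^ 6

/-- The Schwarzschild isoperimetric profile of mass `m`: `φ_m = V_m ∘ A_m⁻¹`, where
`A_m⁻¹ : [16πm², ∞) → [m/2, ∞)` is the inverse of the (bijective, strictly increasing)
area function `A_m : [m/2, ∞) → [16πm², ∞)`. -/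
noncomputable def schwPhi (m A : ℝ) : ℝ :=
  schwV m (Function.invFunOn (schwA m) (Set.Ici (m / 2)) A)

/-! On `[36πm², ∞)` the profile `φ_m` is convex. Indeed, by Cauchy's mean value theorem every
slope of `φ_m = V_m ∘ A_m⁻¹` is a value `V_m'(r) / A_m'(r) = (2r + m)³ / (8r(2r − m))` at some
radius in between, and this function of `r` increases exactly where `(2r + m)² ≥ 12mr`, that is,
where `A_m(r) ≥ 36πm²`.

For a convex `f` the increment `f (x + t) - f x` grows with `x`. Replace `b_k` by `a_k` one
index at a time: the current total is always at least `b_k`, so each replacement raises `f` at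
the total by at least as much as it raises `f (b_k)`. -/

open Real Set

theorem ConvexOn.map_add_sub_map_le {s : Set ℝ} {f : ℝ → ℝ} (hf : ConvexOn ℝ s f) {x y t : ℝ}
    (hx : x ∈ s) (hyt : y + t ∈ s) (hxy : x ≤ y) (ht : 0 ≤ t) :
    f (x + t) - f x ≤ f (y + t) - f y := by
  rcases ht.eq_or_lt with rfl | ht
  · simp
  have hxt : x + t ∈ s := hf.1.ordConnected.out hx hyt ⟨by linarith, by linarith⟩
  have hy : y ∈ s := hf.1.ordConnected.out hx hyt ⟨hxy, by linarith⟩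
  have hslope : (f (x + t) - f x) / t ≤ (f (y + t) - f y) / t :=
    calc (f (x + t) - f x) / t = (f (x + t) - f x) / (x + t - x) := by ring_nf
      _ ≤ (f (y + t) - f x) / (y + t - x) :=
        hf.secant_mono hx hxt hyt (by linarith) (by linarith) (by linarith)
      _ = (f x - f (y + t)) / (x - (y + t)) := by rw [← neg_div_neg_eq, neg_sub, neg_sub]
      _ ≤ (f y - f (y + t)) / (y - (y + t)) :=
        hf.secant_mono hyt hx hy (by linarith) (by linarith) hxy
      _ = (f (y + t) - f y) / t := by rw [← neg_div_neg_eq]; ring_nf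
  exact (div_le_div_iff_of_pos_right ht).1 hslope

theorem ConvexOn.map_add_sum_sub_sum_le {ι : Type*} {f : ℝ → ℝ} {c : ℝ}
    (hf : ConvexOn ℝ (Ici c) f) (hc : 0 ≤ c) (s : Finset ι) {a b : ι → ℝ}
    (hb : ∀ i ∈ s, c ≤ b i) (hab : ∀ i ∈ s, b i ≤ a i) {γ : ℝ} (hγ : 0 ≤ γ) :
    f (γ + ∑ i ∈ s, b i) - ∑ i ∈ s, f (b i) ≤ f (γ + ∑ i ∈ s, a i) - ∑ i ∈ s, f (a i) := by
  induction s using Finset.cons_induction generalizing γ with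
  | empty => simp
  | cons i s hi ih =>
    simp only [Finset.forall_mem_cons] at hb hab
    have hsb : 0 ≤ ∑ j ∈ s, b j := Finset.sum_nonneg fun j hj => hc.trans (hb.2 j hj)
    have step := hf.map_add_sub_map_le (y := γ + b i + ∑ j ∈ s, b j) (t := a i - b i) hb.1
      (by rw [mem_Ici]; linarith [hab.1]) (by linarith) (by linarith [hab.1])
    rw [add_sub_cancel, show γ + b i + ∑ j ∈ s, b j + (a i - b i) = γ + a i + ∑ j ∈ s, b j by ring]
      at step
    have ih' := ih hb.2 hab.2 (γ := γ + a i) (by linarith [hb.1, hab.1])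
    simp only [Finset.sum_cons, ← add_assoc]
    linarith

theorem convexOn_comp_of_rightInvOn {f g g' F h : ℝ → ℝ} {s t : Set ℝ}
    (hs : Convex ℝ s) (ht : Convex ℝ t)
    (hg : ∀ x ∈ s, HasDerivAt g (g' x) x) (hg' : ∀ x ∈ s, 0 < g' x)
    (hf : ∀ x ∈ s, HasDerivAt f (F x * g' x) x) (hF : MonotoneOn F s)
    (hmaps : MapsTo h t s) (hinv : RightInvOn h g t) :
    ConvexOn ℝ t (f ∘ h) := by
  have hgc : ContinuousOn g s := fun x hx => (hg x hx).continuousAt.continuousWithinAt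
  have hfc : ContinuousOn f s := fun x hx => (hf x hx).continuousAt.continuousWithinAt
  have hg_mono : StrictMonoOn g s := strictMonoOn_of_hasDerivWithinAt_pos hs hgc
    (fun x hx => (hg x (interior_subset hx)).hasDerivWithinAt)
    (fun x hx => hg' x (interior_subset hx))
  have hh_mono : StrictMonoOn h t := fun y₁ hy₁ y₂ hy₂ hlt =>
    (hg_mono.lt_iff_lt (hmaps hy₁) (hmaps hy₂)).1 (by rwa [hinv hy₁, hinv hy₂])
  -- Cauchy's mean value theorem turns each slope of `f ∘ h` into a value of `F`.
  have hslope : ∀ y₁ ∈ t, ∀ y₂ ∈ t, y₁ < y₂ →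
      ∃ c ∈ Ioo (h y₁) (h y₂), ((f ∘ h) y₂ - (f ∘ h) y₁) / (y₂ - y₁) = F c := by
    intro y₁ hy₁ y₂ hy₂ hlt
    have hIcc : Icc (h y₁) (h y₂) ⊆ s := hs.ordConnected.out (hmaps hy₁) (hmaps hy₂)
    have hIoo : Ioo (h y₁) (h y₂) ⊆ s := Ioo_subset_Icc_self.trans hIcc
    obtain ⟨c, hc, hcauchy⟩ := exists_ratio_hasDerivAt_eq_ratio_slope g g'
      (hh_mono hy₁ hy₂ hlt) (hgc.mono hIcc) (fun x hx => hg x (hIoo hx))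
      f (fun x => F x * g' x) (hfc.mono hIcc) (fun x hx => hf x (hIoo hx))
    rw [hinv hy₁, hinv hy₂] at hcauchy
    refine ⟨c, hc, ?_⟩
    rw [div_eq_iff (sub_ne_zero.2 hlt.ne')]
    exact mul_right_cancel₀ (hg' c (hIoo hc)).ne'
      (by simp only [Function.comp_apply, hcauchy]; ring)
  refine convexOn_of_slope_mono_adjacent ht fun {x y z} hx hz hxy hyz => ?_
  have hy : y ∈ t := ht.ordConnected.out hx hz ⟨hxy.le, hyz.le⟩
  obtain ⟨c₁, hc₁, hc₁_eq⟩ := hslope x hx y hy hxy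
  obtain ⟨c₂, hc₂, hc₂_eq⟩ := hslope y hy z hz hyz
  rw [hc₁_eq, hc₂_eq]
  have hIcc : Icc (h x) (h z) ⊆ s := hs.ordConnected.out (hmaps hx) (hmaps hz)
  exact hF (hIcc ⟨hc₁.1.le, (hc₁.2.trans (hh_mono hy hz hyz)).le⟩)
    (hIcc ⟨((hh_mono hx hy hxy).trans hc₂.1).le, hc₂.2.le⟩) (hc₁.2.trans hc₂.1).le


section Schwarzschild

variable {m r : ℝ}

theorem schwA_eq_div (m : ℝ) (hr : r ≠ 0) : schwA m r = π * (2 * r + m) ^ 4 / (4 * r ^ 2) := by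
  rw [schwA]; field_simp; ring

theorem schwA_half (hm : m ≠ 0) : schwA m (m / 2) = 16 * π * m ^ 2 := by
  rw [schwA_eq_div m (div_ne_zero hm two_ne_zero)]; field_simp; ring

theorem hasDerivAt_schwA (m : ℝ) (hr : r ≠ 0) :
    HasDerivAt (schwA m) (4 * π * (2 * r - m) * (1 + m / (2 * r)) ^ 3) r := by
  have h2r : HasDerivAt (fun x => 2 * x) 2 r := by simpa using (hasDerivAt_id' r).const_mul 2
  have hq := ((hasDerivAt_const r m).fun_div h2r (by simpa using hr)).const_add 1
  refine (((hasDerivAt_pow 2 r).const_mul (4 * π)).fun_mul (hq.fun_pow 4)).congr_deriv ?_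
  norm_num
  field_simp
  ring

theorem hasDerivAt_schwV (hm : 0 < m) (hr : m / 2 < r) :
    HasDerivAt (schwV m) (4 * π * r ^ 2 * (1 + m / (2 * r)) ^ 6) r := by
  have hcont : ContinuousOn (fun ρ : ℝ => 4 * π * ρ ^ 2 * (1 + m / (2 * ρ)) ^ 6) (Ioi 0) := by
    intro x hx
    have : 2 * x ≠ 0 := by simp only [mem_Ioi] at hx; positivity
    fun_prop (disch := assumption)
  have hr0 : 0 < r := by linarith
  have hsub : uIcc (m / 2) r ⊆ Ioi 0 := by
    rw [uIcc_of_le hr.le]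
    exact fun x hx => lt_of_lt_of_le (by linarith) hx.1
  exact intervalIntegral.integral_hasDerivAt_right ((hcont.mono hsub).intervalIntegrable)
    (hcont.stronglyMeasurableAtFilter isOpen_Ioi r hr0)
    (hcont.continuousAt (isOpen_Ioi.mem_nhds hr0))

theorem schwA_strictMonoOn (hm : 0 < m) : StrictMonoOn (schwA m) (Ici (m / 2)) := by
  have hpos : ∀ x ∈ Ici (m / 2), x ≠ 0 := fun x hx => (lt_of_lt_of_le (by positivity) hx).ne'
  refine strictMonoOn_of_hasDerivWithinAt_pos (convex_Ici _)
    (fun x hx => (hasDerivAt_schwA m (hpos x hx)).continuousAt.continuousWithinAt)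
    (fun x hx => (hasDerivAt_schwA m (hpos x (interior_subset hx))).hasDerivWithinAt) ?_
  intro x hx
  rw [interior_Ici, mem_Ioi] at hx
  have : 0 < x := by linarith
  have : 0 < 2 * x - m := by linarith
  positivity

theorem schwA_surjOn (hm : 0 < m) : SurjOn (schwA m) (Ici (m / 2)) (Ici (16 * π * m ^ 2)) := by
  intro y hy
  rw [mem_Ici] at hy
  have hy0 : 0 ≤ y := le_trans (by positivity) hy
  have hcont : ContinuousOn (schwA m) (Icc (m / 2) (m / 2 + y + 1)) := fun x hx =>
    (hasDerivAt_schwA m (by linarith [hx.1] : x ≠ 0)).continuousAt.continuousWithinAt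
  have hyb : y ≤ schwA m (m / 2 + y + 1) := by
    have hb : 1 ≤ m / 2 + y + 1 := by linarith
    have hq : 1 ≤ (1 + m / (2 * (m / 2 + y + 1))) ^ 4 := one_le_pow₀ (by simp; positivity)
    calc y ≤ (m / 2 + y + 1) ^ 2 := by nlinarith
      _ ≤ 4 * π * (m / 2 + y + 1) ^ 2 := le_mul_of_one_le_left (by positivity)
          (by linarith [pi_gt_three])
      _ ≤ schwA m (m / 2 + y + 1) := le_mul_of_one_le_right (by positivity) hq
  obtain ⟨x, hx, hxy⟩ := intermediate_value_Icc (by linarith) hcont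
    ⟨(schwA_half hm.ne').symm ▸ hy, hyb⟩
  exact ⟨x, hx.1, hxy⟩

/-- `schwF m r = V_m'(r) / A_m'(r)`, the derivative of `φ_m` at `A_m(r)`. -/
noncomputable def schwF (m r : ℝ) : ℝ := (2 * r + m) ^ 3 / (8 * r * (2 * r - m))

theorem hasDerivAt_schwF (hr : r ≠ 0) (hrm : 2 * r - m ≠ 0) :
    HasDerivAt (schwF m)
      ((2 * r + m) ^ 2 * ((2 * r + m) ^ 2 - 12 * m * r) / (8 * r ^ 2 * (2 * r - m) ^ 2)) r := by
  have h2r : HasDerivAt (fun x => 2 * x) 2 r := by simpa using (hasDerivAt_id' r).const_mul 2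
  have h8r : HasDerivAt (fun x => 8 * x) 8 r := by simpa using (hasDerivAt_id' r).const_mul 8
  refine ((((h2r.add_const m).fun_pow 3).fun_div (h8r.fun_mul (h2r.sub_const m))
    (mul_ne_zero (by simpa using hr) hrm))).congr_deriv ?_
  field_simp
  ring

theorem hasDerivAt_schwV_eq_schwF_mul (hm : 0 < m) (hr : m / 2 < r) :
    HasDerivAt (schwV m) (schwF m r * (4 * π * (2 * r - m) * (1 + m / (2 * r)) ^ 3)) r := by
  have hr0 : 0 < r := by linarith
  have hrm : 0 < 2 * r - m := by linarith
  refine (hasDerivAt_schwV hm hr).congr_deriv ?_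
  rw [schwF, one_add_div (by positivity), div_pow, div_pow, div_mul_eq_mul_div,
    eq_div_iff (by positivity)]
  field_simp
  ring

theorem twelve_mul_le_sq_of_le_schwA (hm : 0 ≤ m) (hr : 0 < r)
    (h : 36 * π * m ^ 2 ≤ schwA m r) : 12 * m * r ≤ (2 * r + m) ^ 2 := by
  rw [schwA_eq_div m hr.ne', le_div_iff₀ (by positivity)] at h
  have : (12 * m * r) ^ 2 ≤ ((2 * r + m) ^ 2) ^ 2 := by nlinarith [pi_pos]
  exact (pow_le_pow_iff_left₀ (by positivity) (by positivity) two_ne_zero).1 this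

theorem schwF_monotoneOn (hm : 0 < m) {r₀ : ℝ} (hr₀ : m / 2 < r₀)
    (hA : 36 * π * m ^ 2 ≤ schwA m r₀) : MonotoneOn (schwF m) (Ici r₀) := by
  have hderiv : ∀ r ∈ Ici r₀, HasDerivAt (schwF m)
      ((2 * r + m) ^ 2 * ((2 * r + m) ^ 2 - 12 * m * r) / (8 * r ^ 2 * (2 * r - m) ^ 2)) r :=
    fun r hr => hasDerivAt_schwF (by linarith [mem_Ici.1 hr]) (by linarith [mem_Ici.1 hr])
  refine monotoneOn_of_hasDerivWithinAt_nonneg (convex_Ici _)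
    (fun r hr => (hderiv r hr).continuousAt.continuousWithinAt)
    (fun r hr => (hderiv r (interior_subset hr)).hasDerivWithinAt) ?_
  intro r hr
  rw [interior_Ici, mem_Ioi] at hr
  have hA' : 36 * π * m ^ 2 ≤ schwA m r :=
    hA.trans ((schwA_strictMonoOn hm).monotoneOn (mem_Ici.2 hr₀.le)
      (mem_Ici.2 (by linarith)) hr.le)
  have := twelve_mul_le_sq_of_le_schwA hm.le (by linarith) hA'
  have : 0 ≤ (2 * r + m) ^ 2 - 12 * m * r := by linarith
  positivity

theorem convexOn_schwPhi (hm : 0 < m) : ConvexOn ℝ (Ici (36 * π * m ^ 2)) (schwPhi m) := by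
  set h := Function.invFunOn (schwA m) (Ici (m / 2))
  have hinv : RightInvOn h (schwA m) (Ici (16 * π * m ^ 2)) :=
    (schwA_surjOn hm).rightInvOn_invFunOn
  have hmaps : MapsTo h (Ici (16 * π * m ^ 2)) (Ici (m / 2)) := (schwA_surjOn hm).mapsTo_invFunOn
  have hsub : Ici (36 * π * m ^ 2) ⊆ Ici (16 * π * m ^ 2) :=
    Ici_subset_Ici.2 (by gcongr; norm_num)
  have h36 : 36 * π * m ^ 2 ∈ Ici (16 * π * m ^ 2) := hsub (mem_Ici.2 le_rfl)
  set r₀ := h (36 * π * m ^ 2)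
  have hA₀ : schwA m r₀ = 36 * π * m ^ 2 := hinv h36
  have hr₀ : m / 2 < r₀ := by
    refine lt_of_le_of_ne (hmaps h36) fun heq => ?_
    rw [← heq, schwA_half hm.ne'] at hA₀
    nlinarith [mul_pos pi_pos (pow_pos hm 2)]
  have hmaps₀ : MapsTo h (Ici (36 * π * m ^ 2)) (Ici r₀) := fun y hy =>
    ((schwA_strictMonoOn hm).le_iff_le (hmaps h36) (hmaps (hsub hy))).1
      (by rw [hA₀, hinv (hsub hy)]; exact hy)
  have hpos : ∀ r ∈ Ici r₀, 0 < r ∧ 0 < 2 * r - m := fun r hr => by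
    constructor <;> linarith [mem_Ici.1 hr]
  refine convexOn_comp_of_rightInvOn (convex_Ici r₀) (convex_Ici _)
    (fun r hr => hasDerivAt_schwA m (hpos r hr).1.ne') (fun r hr => ?_)
    (fun r hr => hasDerivAt_schwV_eq_schwF_mul hm (by linarith [(hpos r hr).2]))
    (schwF_monotoneOn hm hr₀ hA₀.ge) hmaps₀ (hinv.mono hsub)
  obtain ⟨hr0, hrm⟩ := hpos r hr
  exact mul_pos (mul_pos (by positivity) hrm) (by positivity)

end Schwarzschild

theorem schwPhi_multi_monotonicity_general (m : ℝ) (hm : 0 < m) (n : ℕ)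
    (a b : Fin n → ℝ) (hb : ∀ k, 36 * Real.pi * m ^ 2 ≤ b k) (hab : ∀ k, b k ≤ a k)
    (γ : ℝ) (hγ : 0 ≤ γ) :
    schwPhi m (γ + ∑ k, b k) - ∑ k, schwPhi m (b k)
      ≤ schwPhi m (γ + ∑ k, a k) - ∑ k, schwPhi m (a k) :=
  (convexOn_schwPhi hm).map_add_sum_sub_sum_le (by positivity) Finset.univ
    (fun k _ => hb k) (fun k _ => hab k) hγ

/-- Multi-component monotonicity for `φ_m`: if `a_k ≥ b_k ≥ 36πm²` and
`γ ≥ 0`, then `φ_m(γ + Σ a_k) − Σ φ_m(a_k) ≥ φ_m(γ + Σ b_k) − Σ φ_m(b_k)`. -/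
theorem schwPhi_multi_monotonicity (m : ℝ) (hm : 0 < m) (n : ℕ) (hn : 0 < n)
    (a b : Fin n → ℝ) (hb : ∀ k, 36 * Real.pi * m ^ 2 ≤ b k) (hab : ∀ k, b k ≤ a k)
    (γ : ℝ) (hγ : 0 ≤ γ) :
    schwPhi m (γ + ∑ k, b k) - ∑ k, schwPhi m (b k)
      ≤ schwPhi m (γ + ∑ k, a k) - ∑ k, schwPhi m (a k) :=
  schwPhi_multi_monotonicity_general m hm n a b hb hab γ hγ
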